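/- arXiv:2106.12933 — 4 statements merged into one kernel-verified Lean document; each statement's English description precedes it below -/
import Mathlib

section
/- Let U_t ∈ ℝ^{n₁×r}, V_t ∈ ℝ^{n₂×r}, and let 𝒦 = { (U_t R, -V_t Rᵀ) : R ∈ ℝ^{r×r} } ⊆ ℝ^{n₁×r} × ℝ^{n₂×r}. Then the orthogonal complement of 𝒦 (with respect to the Frobenius inner product on pairs) equals { (U, V) : Uᵀ U_t = V_tᵀ V }. -/
open Matrix

/-- Frobenius norm of a real matrix. -/
noncomputable def frob {m n : Type*} [Fintype m] [Fintype n] (A : Matrix m n ℝ) : ℝ :=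
  Real.sqrt (∑ i, ∑ j, (A i j) ^ 2)

/-- Largest singular value (ℓ²-operator norm) of a real matrix. -/
noncomputable def sigmaMax {m n : Type*} [Fintype m] [Fintype n] (A : Matrix m n ℝ) : ℝ :=
  sSup {c | ∃ x : n → ℝ, Real.sqrt (∑ j, (x j) ^ 2) = 1 ∧
    c = Real.sqrt (∑ i, (A.mulVec x i) ^ 2)}

/-- Smallest singular value of a real matrix (minimum of ‖Ax‖ over unit vectors x). -/
noncomputable def sigmaMin {m n : Type*} [Fintype m] [Fintype n] (A : Matrix m n ℝ) : ℝ :=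
  sInf {c | ∃ x : n → ℝ, Real.sqrt (∑ j, (x j) ^ 2) = 1 ∧
    c = Real.sqrt (∑ i, (A.mulVec x i) ^ 2)}

/-- The k-th largest singular value of a real matrix (Courant–Fischer max-min). -/
noncomputable def sigmaI {m n : Type*} [Fintype m] [Fintype n] (A : Matrix m n ℝ) (k : ℕ) : ℝ :=
  sSup {c | ∃ S : Submodule ℝ (n → ℝ), Module.finrank ℝ S = k ∧
    c = sInf {d | ∃ x ∈ S, Real.sqrt (∑ j, (x j) ^ 2) = 1 ∧
      d = Real.sqrt (∑ i, (A.mulVec x i) ^ 2)}}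

/-- Procrustes distance: infimum of ‖Z₁ − Z₂ P‖_F over orthogonal P. -/
noncomputable def dP {N r : Type*} [Fintype N] [Fintype r] [DecidableEq r]
    (Z₁ Z₂ : Matrix N r ℝ) : ℝ :=
  sInf {c | ∃ P : Matrix r r ℝ, Pᵀ * P = 1 ∧ c = frob (Z₁ - Z₂ * P)}

/-- Maximum Euclidean row norm ‖A‖_{2,∞}. -/
noncomputable def rowNorm {m n : Type*} [Fintype m] [Fintype n] (A : Matrix m n ℝ) : ℝ :=
  ⨆ i, Real.sqrt (∑ j, (A i j) ^ 2)

lemma trace_mul_transpose_self_eq_zero {n m : ℕ} {M : Matrix (Fin n) (Fin m) ℝ}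
    (h : Matrix.trace (M * Mᵀ) = 0) : M = 0 := by
  have h2 : ∑ i, ∑ j, M i j ^ 2 = 0 := by
    simpa [Matrix.trace, Matrix.mul_apply, Matrix.diag, sq] using h
  ext i j
  have := (Finset.sum_eq_zero_iff_of_nonneg (fun i _ => Finset.sum_nonneg
    (fun j _ => sq_nonneg (M i j)))).mp h2 i (Finset.mem_univ i)
  have := (Finset.sum_eq_zero_iff_of_nonneg (fun j _ => sq_nonneg (M i j))).mp this j
    (Finset.mem_univ j)
  simpa using pow_eq_zero_iff (n := 2) (by norm_num) |>.mp this

theorem kernel_orthogonal_complement (n₁ n₂ r : ℕ)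
    (Ut : Matrix (Fin n₁) (Fin r) ℝ) (Vt : Matrix (Fin n₂) (Fin r) ℝ) :
    {p : Matrix (Fin n₁) (Fin r) ℝ × Matrix (Fin n₂) (Fin r) ℝ |
      ∀ R : Matrix (Fin r) (Fin r) ℝ,
        Matrix.trace (p.1ᵀ * (Ut * R)) + Matrix.trace (p.2ᵀ * (-(Vt * Rᵀ))) = 0}
    = {p : Matrix (Fin n₁) (Fin r) ℝ × Matrix (Fin n₂) (Fin r) ℝ |
        p.1ᵀ * Ut = Vtᵀ * p.2} := by
  ext p
  simp only [Set.mem_setOf_eq]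
  have key : ∀ R : Matrix (Fin r) (Fin r) ℝ,
      Matrix.trace (p.1ᵀ * (Ut * R)) + Matrix.trace (p.2ᵀ * (-(Vt * Rᵀ)))
        = Matrix.trace ((p.1ᵀ * Ut - Vtᵀ * p.2) * R) := by
    intro R
    have h1 : Matrix.trace (p.2ᵀ * (Vt * Rᵀ)) = Matrix.trace ((Vtᵀ * p.2) * R) := by
      rw [← Matrix.trace_transpose (p.2ᵀ * (Vt * Rᵀ))]
      rw [Matrix.transpose_mul, Matrix.transpose_mul, Matrix.transpose_transpose,
        Matrix.transpose_transpose, Matrix.mul_assoc, Matrix.trace_mul_comm]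
    rw [Matrix.mul_neg, Matrix.trace_neg, h1, Matrix.sub_mul, Matrix.trace_sub,
      ← Matrix.mul_assoc]
    ring
  constructor
  · intro h
    have h0 : Matrix.trace ((p.1ᵀ * Ut - Vtᵀ * p.2) * (p.1ᵀ * Ut - Vtᵀ * p.2)ᵀ) = 0 := by
      rw [← key]; exact h _
    have := trace_mul_transpose_self_eq_zero h0
    exact sub_eq_zero.mp this
  · intro h R
    rw [key, h, sub_self, Matrix.zero_mul, Matrix.trace_zero]
end

section
/- Let U_t ∈ ℝ^{n₁×r}, V_t ∈ ℝ^{n₂×r}, and let ΔU, ΔV satisfy U_tᵀ ΔU = ΔVᵀ V_t. Then ‖U_t ΔVᵀ + ΔU V_tᵀ‖_F² ≥ min{σ_r(U_t)², σ_r(V_t)²} · (‖ΔU‖_F² + ‖ΔV‖_F²). -/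
open Matrix

lemma lemA {n r : ℕ} (A : Matrix (Fin n) (Fin r) ℝ) (x : Fin r → ℝ) :
    sigmaMin A ^ 2 * (∑ j, x j ^ 2) ≤ ∑ i, (A.mulVec x i) ^ 2 := by
  set s := ∑ j, x j ^ 2 with hs
  have hs0 : 0 ≤ s := Finset.sum_nonneg fun j _ => sq_nonneg _
  rcases eq_or_lt_of_le hs0 with h | h
  · rw [← h, mul_zero]
    exact Finset.sum_nonneg fun i _ => sq_nonneg _
  · set c := Real.sqrt s with hc
    have hc0 : 0 < c := Real.sqrt_pos.mpr h
    have hc2 : c ^ 2 = s := Real.sq_sqrt hs0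
    set y : Fin r → ℝ := fun j => x j / c with hy
    have hynorm : Real.sqrt (∑ j, (y j) ^ 2) = 1 := by
      have : ∑ j, (y j) ^ 2 = 1 := by
        simp only [hy, div_pow]
        rw [← Finset.sum_div, ← hs, ← hc2, div_self (by positivity)]
      rw [this, Real.sqrt_one]
    have hmem : Real.sqrt (∑ i, (A.mulVec y i) ^ 2) ∈
        {c | ∃ x : Fin r → ℝ, Real.sqrt (∑ j, (x j) ^ 2) = 1 ∧
          c = Real.sqrt (∑ i, (A.mulVec x i) ^ 2)} := ⟨y, hynorm, rfl⟩
    have hbdd : BddBelow {c | ∃ x : Fin r → ℝ, Real.sqrt (∑ j, (x j) ^ 2) = 1 ∧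
        c = Real.sqrt (∑ i, (A.mulVec x i) ^ 2)} := by
      refine ⟨0, fun z hz => ?_⟩
      obtain ⟨w, -, rfl⟩ := hz
      exact Real.sqrt_nonneg _
    have hle : sigmaMin A ≤ Real.sqrt (∑ i, (A.mulVec y i) ^ 2) :=
      csInf_le hbdd hmem
    have hnn : 0 ≤ sigmaMin A :=
      le_csInf ⟨_, hmem⟩ (fun z hz => by obtain ⟨w, -, rfl⟩ := hz; exact Real.sqrt_nonneg _)
    have hsq : sigmaMin A ^ 2 ≤ ∑ i, (A.mulVec y i) ^ 2 := by
      calc sigmaMin A ^ 2 ≤ Real.sqrt (∑ i, (A.mulVec y i) ^ 2) ^ 2 :=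
            pow_le_pow_left₀ hnn hle 2
        _ = ∑ i, (A.mulVec y i) ^ 2 :=
            Real.sq_sqrt (Finset.sum_nonneg fun i _ => sq_nonneg _)
    have hmv : ∀ i, A.mulVec y i = A.mulVec x i / c := by
      intro i
      simp only [hy, Matrix.mulVec, dotProduct]
      rw [Finset.sum_div]
      exact Finset.sum_congr rfl fun j _ => by ring
    have hsum : ∑ i, (A.mulVec y i) ^ 2 = (∑ i, (A.mulVec x i) ^ 2) / s := by
      rw [← hc2, Finset.sum_div]
      exact Finset.sum_congr rfl fun i _ => by rw [hmv i, div_pow]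
    rw [hsum] at hsq
    calc sigmaMin A ^ 2 * s ≤ ((∑ i, (A.mulVec x i) ^ 2) / s) * s :=
          mul_le_mul_of_nonneg_right hsq hs0
      _ = ∑ i, (A.mulVec x i) ^ 2 := by field_simp

theorem linearization_lower_bound (n₁ n₂ r : ℕ) (hr₁ : r ≤ n₁) (hr₂ : r ≤ n₂)
    (Ut ΔU : Matrix (Fin n₁) (Fin r) ℝ) (Vt ΔV : Matrix (Fin n₂) (Fin r) ℝ)
    (hconstraint : Utᵀ * ΔU = ΔVᵀ * Vt) :
    min (sigmaMin Ut ^ 2) (sigmaMin Vt ^ 2) * (frob ΔU ^ 2 + frob ΔV ^ 2)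
      ≤ frob (Ut * ΔVᵀ + ΔU * Vtᵀ) ^ 2 := by
  set SA := ∑ i, ∑ j, ((Ut * ΔVᵀ) i j) ^ 2 with hSA
  set SB := ∑ i, ∑ j, ((ΔU * Vtᵀ) i j) ^ 2 with hSB
  set cross := ∑ i, ∑ j, (Ut * ΔVᵀ) i j * (ΔU * Vtᵀ) i j with hcrossdef
  have ha : frob ΔU ^ 2 = ∑ i, ∑ j, ΔU i j ^ 2 :=
    Real.sq_sqrt (by positivity)
  have hb : frob ΔV ^ 2 = ∑ i, ∑ j, ΔV i j ^ 2 :=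
    Real.sq_sqrt (by positivity)
  -- expansion of the Frobenius norm of the sum
  have hM : frob (Ut * ΔVᵀ + ΔU * Vtᵀ) ^ 2 = SA + SB + 2 * cross := by
    have h0 : frob (Ut * ΔVᵀ + ΔU * Vtᵀ) ^ 2
        = ∑ i, ∑ j, ((Ut * ΔVᵀ) i j + (ΔU * Vtᵀ) i j) ^ 2 := by
      rw [frob, Real.sq_sqrt (by positivity)]
      simp [Matrix.add_apply]
    rw [h0]
    have h1 : ∑ i, ∑ j, ((Ut * ΔVᵀ) i j + (ΔU * Vtᵀ) i j) ^ 2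
        = ∑ i, ∑ j, (((Ut * ΔVᵀ) i j) ^ 2 + ((ΔU * Vtᵀ) i j) ^ 2
            + 2 * ((Ut * ΔVᵀ) i j * (ΔU * Vtᵀ) i j)) :=
      Finset.sum_congr rfl fun i _ => Finset.sum_congr rfl fun j _ => by ring
    rw [h1]
    simp only [Finset.sum_add_distrib, ← Finset.mul_sum]
    rfl
  -- cross term is nonnegative
  have hcross : 0 ≤ cross := by
    have h1 : cross = Matrix.trace ((Ut * ΔVᵀ)ᵀ * (ΔU * Vtᵀ)) := by
      rw [hcrossdef, Matrix.trace]
      simp only [Matrix.diag, Matrix.mul_apply, Matrix.transpose_apply]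
      rw [Finset.sum_comm]
    have h2 : Vtᵀ * ΔV = (Utᵀ * ΔU)ᵀ := by
      rw [hconstraint, Matrix.transpose_mul, Matrix.transpose_transpose]
    have h3 : cross = Matrix.trace ((Utᵀ * ΔU) * (Utᵀ * ΔU)ᵀ) := by
      rw [h1, Matrix.transpose_mul, Matrix.transpose_transpose]
      rw [show ΔV * Utᵀ * (ΔU * Vtᵀ) = ΔV * (Utᵀ * ΔU * Vtᵀ) by
        simp [Matrix.mul_assoc]]
      rw [Matrix.trace_mul_comm, Matrix.mul_assoc, Matrix.mul_assoc, h2]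
      rw [← Matrix.mul_assoc]
    rw [h3, Matrix.trace]
    refine Finset.sum_nonneg fun i _ => ?_
    simp only [Matrix.diag, Matrix.mul_apply, Matrix.transpose_apply]
    exact Finset.sum_nonneg fun j _ => mul_self_nonneg _
  -- lower bound for SA
  have hA : sigmaMin Ut ^ 2 * frob ΔV ^ 2 ≤ SA := by
    have hswap : SA = ∑ j, ∑ i, ((Ut * ΔVᵀ) i j) ^ 2 := by rw [hSA]; exact Finset.sum_comm
    rw [hswap, hb, Finset.mul_sum]
    refine Finset.sum_le_sum fun j _ => ?_
    calc sigmaMin Ut ^ 2 * ∑ k, ΔV j k ^ 2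
        ≤ ∑ i, (Ut.mulVec (fun k => ΔV j k) i) ^ 2 := lemA Ut _
      _ = ∑ i, ((Ut * ΔVᵀ) i j) ^ 2 :=
          Finset.sum_congr rfl fun i _ => by
            simp [Matrix.mul_apply, Matrix.mulVec, dotProduct, Matrix.transpose_apply]
  -- lower bound for SB
  have hB : sigmaMin Vt ^ 2 * frob ΔU ^ 2 ≤ SB := by
    rw [ha, Finset.mul_sum]
    refine Finset.sum_le_sum fun i _ => ?_
    calc sigmaMin Vt ^ 2 * ∑ k, ΔU i k ^ 2
        ≤ ∑ j, (Vt.mulVec (fun k => ΔU i k) j) ^ 2 := lemA Vt _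
      _ = ∑ j, ((ΔU * Vtᵀ) i j) ^ 2 :=
          Finset.sum_congr rfl fun j _ => by
            simp [Matrix.mul_apply, Matrix.mulVec, dotProduct, Matrix.transpose_apply,
              mul_comm]
  have ha0 : 0 ≤ frob ΔU ^ 2 := sq_nonneg _
  have hb0 : 0 ≤ frob ΔV ^ 2 := sq_nonneg _
  have h1 := mul_le_mul_of_nonneg_right
    (min_le_right (sigmaMin Ut ^ 2) (sigmaMin Vt ^ 2)) ha0
  have h2 := mul_le_mul_of_nonneg_right
    (min_le_left (sigmaMin Ut ^ 2) (sigmaMin Vt ^ 2)) hb0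
  rw [hM]
  nlinarith [h1, h2, hA, hB, hcross]
end

section
/- Let X* ∈ ℝ^{n₁×n₂} have rank r, let Z* = (U*; V*) be its balanced-SVD factorization (U* = Ū Σ^{1/2}, V* = V̄ Σ^{1/2}). Then for any Z = (U; V) ∈ ℝ^{(n₁+n₂)×r}, the squared Procrustes distance satisfies d_P²(Z, Z*) ≤ (1/((√2 − 1) σ_r(X*))) · ( ‖U Vᵀ − X*‖_F² + (1/4) ‖Uᵀ U − Vᵀ V‖_F² ). -/
open Matrix

set_option maxHeartbeats 1000000

namespace ProcrustesAux

open Matrix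

variable {m n : Type*} [Fintype m] [Fintype n]

/-- squared Frobenius norm -/
noncomputable def fs (A : Matrix m n ℝ) : ℝ := ∑ i, ∑ j, (A i j) ^ 2

lemma fs_nonneg (A : Matrix m n ℝ) : 0 ≤ fs A :=
  Finset.sum_nonneg fun _ _ => Finset.sum_nonneg fun _ _ => sq_nonneg _

lemma frob_eq (A : Matrix m n ℝ) : frob A = Real.sqrt (fs A) := rfl

lemma frob_nonneg (A : Matrix m n ℝ) : 0 ≤ frob A := Real.sqrt_nonneg _

lemma frob_sq (A : Matrix m n ℝ) : frob A ^ 2 = fs A :=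
  Real.sq_sqrt (fs_nonneg A)

lemma fs_eq_sq_frob (A : Matrix m n ℝ) : fs A = frob A ^ 2 := (frob_sq A).symm

lemma fs_eq_trace (A : Matrix m n ℝ) : fs A = Matrix.trace (Aᵀ * A) := by
  unfold fs Matrix.trace
  simp only [diag_apply, mul_apply, transpose_apply, sq]
  exact Finset.sum_comm

lemma trace_transpose_mul_eq_sum (A B : Matrix m n ℝ) :
    Matrix.trace (Aᵀ * B) = ∑ x : m × n, A x.1 x.2 * B x.1 x.2 := by
  unfold Matrix.trace
  simp only [diag_apply, mul_apply, transpose_apply, Fintype.sum_prod_type]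
  exact Finset.sum_comm

lemma fs_eq_sum_pair (A : Matrix m n ℝ) : fs A = ∑ x : m × n, (A x.1 x.2) ^ 2 := by
  unfold fs; rw [Fintype.sum_prod_type]

/-- Cauchy–Schwarz lower bound for the trace inner product. -/
lemma neg_frob_mul_frob_le_trace (A B : Matrix m n ℝ) :
    -(frob A * frob B) ≤ Matrix.trace (Aᵀ * B) := by
  have h : (Matrix.trace (Aᵀ * B)) ^ 2 ≤ fs A * fs B := by
    rw [trace_transpose_mul_eq_sum, fs_eq_sum_pair, fs_eq_sum_pair]
    exact Finset.sum_mul_sq_le_sq_mul_sq Finset.univ _ _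
  nlinarith [frob_nonneg A, frob_nonneg B, frob_sq A, frob_sq B,
    mul_nonneg (frob_nonneg A) (frob_nonneg B)]

lemma psd_trace_nonneg [DecidableEq n] {A : Matrix n n ℝ} (hA : A.PosSemidef) :
    0 ≤ Matrix.trace A := by
  have h : ∀ i, 0 ≤ A i i := by
    intro i
    have := hA.diag_nonneg (i := i)
    simpa using this
  exact Finset.sum_nonneg fun i _ => h i

lemma trace_mul_nonneg [DecidableEq n] {A B : Matrix n n ℝ}
    (hA : A.PosSemidef) (hB : B.PosSemidef) : 0 ≤ Matrix.trace (A * B) := by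
  obtain ⟨R, hRH, hR⟩ : ∃ R : Matrix n n ℝ, Rᴴ = R ∧ R * R = A :=
    by open scoped MatrixOrder in exact ⟨CFC.sqrt A, (CFC.sqrt_nonneg A).posSemidef.isHermitian, CFC.sqrt_mul_sqrt_self A hA.nonneg⟩
  subst hR
  have hpsd : (R * B * R).PosSemidef := by
    have := hB.mul_mul_conjTranspose_same R
    rwa [hRH] at this
  have h1 : Matrix.trace (R * R * B) = Matrix.trace (R * B * R) :=
    (Matrix.trace_mul_cycle R B R).symm
  rw [h1]
  exact psd_trace_nonneg hpsd

lemma transpose_psd {A : Matrix m n ℝ} : (Aᵀ * A).PosSemidef := by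
  have := Matrix.posSemidef_conjTranspose_mul_self A
  rwa [conjTranspose_eq_transpose_of_trivial] at this


section Polar
variable {n : Type*} [Fintype n] [DecidableEq n]

lemma polar_inv (M : Matrix n n ℝ) (h : IsUnit M.det) :
    ∃ P : Matrix n n ℝ, Pᵀ * P = 1 ∧ (Pᵀ * M).PosSemidef := by
  have hMM : (Mᵀ * M).PosSemidef := by
    have := Matrix.posSemidef_conjTranspose_mul_self M
    rwa [conjTranspose_eq_transpose_of_trivial] at this
  obtain ⟨H, hHpsd, hHH⟩ : ∃ H : Matrix n n ℝ, H.PosSemidef ∧ H * H = Mᵀ * M :=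
    by open scoped MatrixOrder in exact ⟨CFC.sqrt (Mᵀ * M), (CFC.sqrt_nonneg _).posSemidef, CFC.sqrt_mul_sqrt_self _ hMM.nonneg⟩
  have hHsymm : Hᵀ = H := by
    have := hHpsd.isHermitian
    rwa [Matrix.IsHermitian, conjTranspose_eq_transpose_of_trivial] at this
  have hdetH : IsUnit H.det := by
    rw [isUnit_iff_ne_zero] at h ⊢
    intro h0
    apply h
    have h1 : H.det * H.det = M.det * M.det := by
      have := congrArg Matrix.det hHH
      rwa [Matrix.det_mul, Matrix.det_mul, Matrix.det_transpose] at this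
    nlinarith
  refine ⟨M * H⁻¹, ?_, ?_⟩
  · rw [Matrix.transpose_mul, Matrix.transpose_nonsing_inv, hHsymm]
    calc H⁻¹ * Mᵀ * (M * H⁻¹) = H⁻¹ * (Mᵀ * M) * H⁻¹ := by
          rw [Matrix.mul_assoc, Matrix.mul_assoc, Matrix.mul_assoc]
      _ = H⁻¹ * (H * H) * H⁻¹ := by rw [hHH]
      _ = (H⁻¹ * H) * (H * H⁻¹) := by rw [Matrix.mul_assoc, Matrix.mul_assoc, Matrix.mul_assoc]
      _ = 1 := by rw [Matrix.nonsing_inv_mul _ hdetH, Matrix.mul_nonsing_inv _ hdetH, Matrix.one_mul]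
  · rw [Matrix.transpose_mul, Matrix.transpose_nonsing_inv, hHsymm]
    have : H⁻¹ * Mᵀ * M = H := by
      rw [Matrix.mul_assoc, ← hHH, ← Matrix.mul_assoc, Matrix.nonsing_inv_mul _ hdetH,
        Matrix.one_mul]
    rw [this]
    exact hHpsd

lemma polar (M : Matrix n n ℝ) :
    ∃ P : Matrix n n ℝ, Pᵀ * P = 1 ∧ (Pᵀ * M).PosSemidef := by
  classical
  -- the set of bad shift parameters is finite
  have hbad : {t : ℝ | ¬ IsUnit (M - t • 1).det}.Finite := by
    apply (Matrix.finite_spectrum (R := ℝ) M).subset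
    intro t ht
    simp only [Set.mem_setOf_eq] at ht
    rw [spectrum.mem_iff]
    intro hu
    apply ht
    have halg : algebraMap ℝ (Matrix n n ℝ) t = t • 1 := Algebra.algebraMap_eq_smul_one t
    rw [halg] at hu
    have := hu.neg
    rw [neg_sub] at this
    exact (Matrix.isUnit_iff_isUnit_det _).mp this
  have hseq : ∀ k : ℕ, ∃ t : ℝ, t ∈ Set.Ioo (0:ℝ) (1/(k+1)) ∧ IsUnit (M - t • 1).det := by
    intro k
    have hIoo : (Set.Ioo (0:ℝ) (1/(k+1))).Infinite := Set.Ioo_infinite (by positivity)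
    obtain ⟨t, ht⟩ := (hIoo.diff hbad).nonempty
    exact ⟨t, ht.1, not_not.mp ht.2⟩
  choose ts hts hunit using hseq
  choose Ps hPo hPpsd using fun k => polar_inv (M - ts k • 1) (hunit k)
  -- compactness of the orthogonal set
  set K : Set (Matrix n n ℝ) := {P | Pᵀ * P = 1} with hK
  have hKclosed : IsClosed K :=
    isClosed_eq (Continuous.matrix_mul (Continuous.matrix_transpose continuous_id) continuous_id)
      continuous_const
  have hKsub : K ⊆ Set.univ.pi fun _ : n => Set.univ.pi fun _ : n => Set.Icc (-1:ℝ) 1 := by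
    intro P hP
    have hP' : Pᵀ * P = 1 := hP
    intro i _ j _
    have hdiag : ∑ k, P k j * P k j = 1 := by
      have := congrFun (congrFun hP' j) j
      simpa [Matrix.mul_apply, Matrix.one_apply] using this
    have hle : P i j * P i j ≤ 1 := by
      rw [← hdiag]
      exact Finset.single_le_sum (f := fun k => P k j * P k j)
        (fun k _ => mul_self_nonneg _) (Finset.mem_univ i)
    constructor <;> nlinarith
  have hKcomp : IsCompact K := by
    refine IsCompact.of_isClosed_subset ?_ hKclosed hKsub
    exact isCompact_univ_pi fun _ => isCompact_univ_pi fun _ => isCompact_Icc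
  haveI : FirstCountableTopology (Matrix n n ℝ) :=
    inferInstanceAs (FirstCountableTopology (n → n → ℝ))
  obtain ⟨P, hPK, φ, hφ, hconv⟩ := hKcomp.tendsto_subseq (fun k => (hPo k : Ps k ∈ K))
  -- limit of the shifts
  have hts0 : Filter.Tendsto ts Filter.atTop (nhds 0) := by
    apply squeeze_zero (fun k => (hts k).1.le) (fun k => (hts k).2.le)
    exact tendsto_one_div_add_atTop_nhds_zero_nat
  have htφ : Filter.Tendsto (ts ∘ φ) Filter.atTop (nhds 0) := hts0.comp hφ.tendsto_atTop
  -- the limit of Pₙᵀ (M - tₙ 1)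
  have hcontg : Continuous (fun q : Matrix n n ℝ × ℝ => (q.1)ᵀ * (M - q.2 • (1 : Matrix n n ℝ))) := by
    apply Continuous.matrix_mul (Continuous.matrix_transpose continuous_fst)
    exact continuous_const.sub (continuous_snd.smul continuous_const)
  have hprod : Filter.Tendsto (fun k => (Ps (φ k), ts (φ k))) Filter.atTop (nhds (P, (0:ℝ))) :=
    Filter.Tendsto.prodMk_nhds hconv htφ
  have hHconv : Filter.Tendsto (fun k => (Ps (φ k))ᵀ * (M - ts (φ k) • 1)) Filter.atTop
      (nhds (Pᵀ * M)) := by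
    have := (hcontg.tendsto (P, (0:ℝ))).comp hprod
    simpa [Function.comp_def] using this
  refine ⟨P, hPK, Matrix.PosSemidef.of_dotProduct_mulVec_nonneg ?_ ?_⟩
  · -- Hermitian
    have h1 : Filter.Tendsto (fun k => ((Ps (φ k))ᵀ * (M - ts (φ k) • 1))ᵀ) Filter.atTop
        (nhds ((Pᵀ * M)ᵀ)) :=
      ((Continuous.matrix_transpose continuous_id).tendsto _).comp hHconv
    have h2 : ∀ k, ((Ps (φ k))ᵀ * (M - ts (φ k) • 1))ᵀ = (Ps (φ k))ᵀ * (M - ts (φ k) • 1) := by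
      intro k
      have := (hPpsd (φ k)).isHermitian
      rwa [Matrix.IsHermitian, conjTranspose_eq_transpose_of_trivial] at this
    rw [Matrix.IsHermitian, conjTranspose_eq_transpose_of_trivial]
    refine tendsto_nhds_unique ?_ hHconv
    simpa only [h2] using h1
  · intro x
    have hqc : Continuous (fun A : Matrix n n ℝ => dotProduct (star x) (A *ᵥ x)) :=
      Continuous.dotProduct continuous_const
        (Continuous.matrix_mulVec continuous_id continuous_const)
    have hlim : Filter.Tendsto
        (fun k => dotProduct (star x) (((Ps (φ k))ᵀ * (M - ts (φ k) • 1)) *ᵥ x))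
        Filter.atTop (nhds (dotProduct (star x) ((Pᵀ * M) *ᵥ x))) :=
      (hqc.tendsto _).comp hHconv
    exact ge_of_tendsto' hlim (fun k => (hPpsd (φ k)).dotProduct_mulVec_nonneg x)


end Polar

lemma scalar_final (sq2 σr a b c d2 s d e p : ℝ) (hs2 : sq2^2 = 2) (h1s : 1 ≤ sq2)
    (hσr : 0 ≤ σr) (h1 : 0 ≤ c + a) (hcb : -(s*d) ≤ c) (hb : b = s^2) (hd2 : d2 = d^2)
    (hs0 : 0 ≤ s) (hd0 : 0 ≤ d) (h5 : 2*σr*e ≤ a) (he : 0 ≤ e) (hp : p ≤ e) (hp0 : 0 ≤ p) :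
    4*(sq2-1)*σr*p ≤ 2*a + 2*b + 4*c + d2 := by
  have hsq0 : 0 ≤ sq2 := by linarith
  have hsle : sq2 ≤ 2 := by nlinarith
  have k1 : 0 ≤ (4-2*sq2)*(c+a) := mul_nonneg (by linarith) h1
  have k2 : 0 ≤ 2*sq2*(c+s*d) := mul_nonneg (by linarith) (by linarith)
  have k3 : 0 ≤ (sq2*s-d)^2 := sq_nonneg _
  have k3' : (sq2*s-d)^2 = 2*s^2-2*sq2*(s*d)+d^2 := by rw [sub_sq, mul_pow, hs2]; ring
  have k4 : 0 ≤ (2*sq2-2)*(a-2*σr*e) := mul_nonneg (by linarith) (by linarith)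
  have k5 : 0 ≤ 4*(sq2-1)*σr*(e-p) :=
    mul_nonneg (mul_nonneg (by linarith) hσr) (by linarith)
  nlinarith [k1, k2, k3, k3', k4, k5]

lemma key {N r' : Type*} [Fintype N] [Fintype r'] [DecidableEq r'] (Z Zs : Matrix N r' ℝ)
    (σr : ℝ) (hσr : 0 ≤ σr)
    (hZs : (Zsᵀ * Zs - ((2*σr) • (1 : Matrix r' r' ℝ))).PosSemidef) :
    4*(Real.sqrt 2 - 1)*σr * dP Z Zs ^ 2 ≤ fs (Z*Zᵀ - Zs*Zsᵀ) := by
  obtain ⟨P, hP, hpsd⟩ := polar (Zsᵀ * Z)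
  have hPP' : P * Pᵀ = 1 := mul_eq_one_comm.mp hP
  set Zt : Matrix N r' ℝ := Zs * P with hZt
  set E : Matrix N r' ℝ := Z - Zt with hE
  set S : Matrix r' r' ℝ := Ztᵀ * E with hS
  set D : Matrix r' r' ℝ := Eᵀ * E with hD
  set Km : Matrix r' r' ℝ := Ztᵀ * Zt with hKm
  have hZtZ : Ztᵀ * Z = Pᵀ * (Zsᵀ * Z) := by
    rw [hZt, Matrix.transpose_mul, Matrix.mul_assoc]
  have hZtZpsd : (Ztᵀ * Z).PosSemidef := by rw [hZtZ]; exact hpsd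
  have hZtZsym : (Ztᵀ * Z)ᵀ = Ztᵀ * Z := by
    have := hZtZpsd.isHermitian
    rwa [Matrix.IsHermitian, conjTranspose_eq_transpose_of_trivial] at this
  have hZtZt : Zt * Ztᵀ = Zs * Zsᵀ := by
    rw [hZt, Matrix.transpose_mul, Matrix.mul_assoc, ← Matrix.mul_assoc P, hPP',
      Matrix.one_mul]
  have hKmsym : Kmᵀ = Km := by rw [hKm, Matrix.transpose_mul, Matrix.transpose_transpose]
  have hSsym : Sᵀ = S := by
    rw [hS, Matrix.mul_sub, Matrix.transpose_sub, hZtZsym, ← hKm, hKmsym]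
  have hDpsd : D.PosSemidef := transpose_psd
  have hKmpsd : Km.PosSemidef := transpose_psd
  have hSK : S + Km = Ztᵀ * Z := by rw [hS, hKm, Matrix.mul_sub]; abel
  have hKmshift : (Km - (2*σr) • (1 : Matrix r' r' ℝ)).PosSemidef := by
    have h1 : Km - (2*σr) • (1 : Matrix r' r' ℝ)
        = Pᵀ * (Zsᵀ * Zs - (2*σr) • (1 : Matrix r' r' ℝ)) * P := by
      rw [Matrix.mul_sub, Matrix.sub_mul]
      congr 1
      · rw [hKm, hZt, Matrix.transpose_mul]; simp only [Matrix.mul_assoc]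
      · rw [Matrix.mul_smul, Matrix.smul_mul, Matrix.mul_one, hP]
    rw [h1]
    have := hZs.conjTranspose_mul_mul_same P
    rwa [conjTranspose_eq_transpose_of_trivial] at this
  -- decomposition
  set F : Matrix N N ℝ := E * Ztᵀ with hF
  set F' : Matrix N N ℝ := Zt * Eᵀ with hF'
  set G : Matrix N N ℝ := E * Eᵀ with hG
  have hFt : Fᵀ = F' := by rw [hF, hF', Matrix.transpose_mul, Matrix.transpose_transpose]
  have hGt : Gᵀ = G := by rw [hG, Matrix.transpose_mul, Matrix.transpose_transpose]
  have hM : Z*Zᵀ - Zs*Zsᵀ = F + F' + G := by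
    rw [← hZtZt]
    have hz : Z = E + Zt := by rw [hE]; abel
    calc Z*Zᵀ - Zt*Ztᵀ = (E+Zt)*(E+Zt)ᵀ - Zt*Ztᵀ := by rw [← hz]
      _ = (E*Eᵀ + E*Ztᵀ + (Zt*Eᵀ + Zt*Ztᵀ)) - Zt*Ztᵀ := by
          rw [Matrix.transpose_add, Matrix.add_mul, Matrix.mul_add, Matrix.mul_add]
      _ = F + F' + G := by rw [hF, hF', hG]; abel
  have hMt : (F + F' + G)ᵀ = F + F' + G := by
    rw [Matrix.transpose_add, Matrix.transpose_add, hFt, hGt, ← hFt,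
      Matrix.transpose_transpose, hFt]
    abel
  -- the nine traces
  have tFF : Matrix.trace (F*F) = Matrix.trace (S*S) := by
    rw [hF, hS]
    rw [Matrix.mul_assoc, Matrix.trace_mul_comm]
    simp only [Matrix.mul_assoc]
  have tFF' : Matrix.trace (F*F') = Matrix.trace (Km*D) := by
    rw [hF, hF', hKm, hD]
    rw [Matrix.mul_assoc, Matrix.trace_mul_comm]
    simp only [Matrix.mul_assoc]
  have tFG : Matrix.trace (F*G) = Matrix.trace (S*D) := by
    rw [hF, hG, hS, hD]
    rw [Matrix.mul_assoc, Matrix.trace_mul_comm]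
    simp only [Matrix.mul_assoc]
  have tF'F : Matrix.trace (F'*F) = Matrix.trace (Km*D) := by
    rw [Matrix.trace_mul_comm, tFF']
  have tF'F' : Matrix.trace (F'*F') = Matrix.trace (S*S) := by
    rw [← hFt, ← Matrix.transpose_mul, Matrix.trace_transpose, tFF]
  have tF'G : Matrix.trace (F'*G) = Matrix.trace (S*D) := by
    have h : F'*G = (G*F)ᵀ := by rw [Matrix.transpose_mul, hFt, hGt]
    rw [h, Matrix.trace_transpose, Matrix.trace_mul_comm, tFG]
  have tGF : Matrix.trace (G*F) = Matrix.trace (S*D) := by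
    rw [Matrix.trace_mul_comm, tFG]
  have tGF' : Matrix.trace (G*F') = Matrix.trace (S*D) := by
    have h : G*F' = (F*G)ᵀ := by rw [Matrix.transpose_mul, hFt, hGt]
    rw [h, Matrix.trace_transpose, tFG]
  have tGG : Matrix.trace (G*G) = Matrix.trace (D*D) := by
    rw [hG, hD]
    rw [Matrix.mul_assoc, Matrix.trace_mul_comm]
    simp only [Matrix.mul_assoc]
  -- main identity
  have hfs : fs (Z*Zᵀ - Zs*Zsᵀ) = 2*Matrix.trace (Km*D) + 2*Matrix.trace (S*S)
      + 4*Matrix.trace (S*D) + Matrix.trace (D*D) := by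
    rw [fs_eq_trace, hM, hMt]
    simp only [Matrix.add_mul, Matrix.mul_add, Matrix.trace_add]
    rw [tFF, tFF', tFG, tF'F, tF'F', tF'G, tGF, tGF', tGG]
    ring
  -- inequalities
  have h1 : 0 ≤ Matrix.trace (S*D) + Matrix.trace (Km*D) := by
    have := trace_mul_nonneg (hSK ▸ hZtZpsd) hDpsd
    rwa [Matrix.add_mul, Matrix.trace_add] at this
  have h5 : 2*σr * fs E ≤ Matrix.trace (Km*D) := by
    have h0 := trace_mul_nonneg hKmshift hDpsd
    rw [Matrix.sub_mul, Matrix.trace_sub, Matrix.smul_mul, Matrix.one_mul,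
      Matrix.trace_smul] at h0
    have hDtr : Matrix.trace D = fs E := (fs_eq_trace E).symm
    rw [hDtr] at h0
    simp only [smul_eq_mul] at h0
    linarith
  have hb : Matrix.trace (S*S) = fs S := by
    have h := fs_eq_trace S
    rw [hSsym] at h
    exact h.symm
  have hd2 : Matrix.trace (D*D) = fs D := by
    have hDsym : Dᵀ = D := by rw [hD, Matrix.transpose_mul, Matrix.transpose_transpose]
    have h := fs_eq_trace D
    rw [hDsym] at h
    exact h.symm
  have hcb : -(frob S * frob D) ≤ Matrix.trace (S*D) := by
    have := neg_frob_mul_frob_le_trace S D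
    rwa [hSsym] at this
  -- dP bound
  have hdPle : dP Z Zs ≤ frob E := by
    apply csInf_le
    · exact ⟨0, fun x ⟨Q, hQ, hx⟩ => hx ▸ frob_nonneg _⟩
    · exact ⟨P, hP, rfl⟩
  have hdP0 : 0 ≤ dP Z Zs := by
    apply Real.sInf_nonneg
    rintro x ⟨Q, hQ, rfl⟩
    exact frob_nonneg _
  have hdp2 : dP Z Zs ^ 2 ≤ fs E := by
    rw [← frob_sq E]
    exact pow_le_pow_left₀ hdP0 hdPle 2
  -- scalar assembly
  have hs2 : Real.sqrt 2 ^ 2 = 2 := Real.sq_sqrt (by norm_num)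
  have h1s : 1 ≤ Real.sqrt 2 := by
    nlinarith [hs2, Real.sqrt_nonneg 2]
  have hs2' : Real.sqrt 2 ≤ 2 := by
    nlinarith [hs2, Real.sqrt_nonneg 2]
  rw [hfs]
  exact scalar_final (Real.sqrt 2) σr (Matrix.trace (Km*D)) (Matrix.trace (S*S))
    (Matrix.trace (S*D)) (Matrix.trace (D*D)) (frob S) (frob D) (fs E) (dP Z Zs ^ 2)
    hs2 h1s hσr h1 hcb (by rw [hb, ← frob_sq S]) (by rw [hd2, ← frob_sq D])
    (frob_nonneg S) (frob_nonneg D) h5 (fs_nonneg E) hdp2 (sq_nonneg _)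


lemma fs_gram_sub {N r' : Type*} [Fintype N] [Fintype r'] (X Y : Matrix N r' ℝ) :
    fs (X*Xᵀ - Y*Yᵀ) = Matrix.trace ((Xᵀ*X)*(Xᵀ*X)) - 2*Matrix.trace ((Xᵀ*Y)*(Xᵀ*Y)ᵀ)
      + Matrix.trace ((Yᵀ*Y)*(Yᵀ*Y)) := by
  rw [fs_eq_trace]
  have hMt : (X*Xᵀ - Y*Yᵀ)ᵀ = X*Xᵀ - Y*Yᵀ := by
    simp [Matrix.transpose_sub, Matrix.transpose_mul]
  rw [hMt]
  simp only [Matrix.sub_mul, Matrix.mul_sub, Matrix.trace_sub]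
  have t1 : Matrix.trace (X*Xᵀ*(X*Xᵀ)) = Matrix.trace ((Xᵀ*X)*(Xᵀ*X)) := by
    rw [Matrix.mul_assoc, Matrix.trace_mul_comm]; simp only [Matrix.mul_assoc]
  have t2 : Matrix.trace (X*Xᵀ*(Y*Yᵀ)) = Matrix.trace ((Xᵀ*Y)*(Xᵀ*Y)ᵀ) := by
    rw [Matrix.mul_assoc, Matrix.trace_mul_comm]
    simp only [Matrix.transpose_mul, Matrix.transpose_transpose, Matrix.mul_assoc]
  have t3 : Matrix.trace (Y*Yᵀ*(X*Xᵀ)) = Matrix.trace ((Xᵀ*Y)*(Xᵀ*Y)ᵀ) := by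
    rw [Matrix.trace_mul_comm, t2]
  have t4 : Matrix.trace (Y*Yᵀ*(Y*Yᵀ)) = Matrix.trace ((Yᵀ*Y)*(Yᵀ*Y)) := by
    rw [Matrix.mul_assoc, Matrix.trace_mul_comm]; simp only [Matrix.mul_assoc]
  rw [t1, t2, t3, t4]; ring

lemma fs_block {r' : Type*} [Fintype r']
    (U : Matrix m r' ℝ) (V : Matrix n r' ℝ) (A : Matrix m r' ℝ) (B : Matrix n r' ℝ)
    (hAB : Aᵀ*A = Bᵀ*B) :
    fs (fromRows U V * (fromRows U V)ᵀ - fromRows A B * (fromRows A B)ᵀ)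
      + 2 * fs (Uᵀ*A - Vᵀ*B)
    = 4 * fs (U*Vᵀ - A*Bᵀ) + fs (Uᵀ*U - Vᵀ*V) := by
  have hXX : (fromRows U V)ᵀ * fromRows U V = Uᵀ*U + Vᵀ*V := by
    rw [Matrix.transpose_fromRows, Matrix.fromCols_mul_fromRows]
  have hXY : (fromRows U V)ᵀ * fromRows A B = Uᵀ*A + Vᵀ*B := by
    rw [Matrix.transpose_fromRows, Matrix.fromCols_mul_fromRows]
  have hYY : (fromRows A B)ᵀ * fromRows A B = Aᵀ*A + Aᵀ*A := by
    rw [Matrix.transpose_fromRows, Matrix.fromCols_mul_fromRows, hAB]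
  rw [fs_gram_sub, hXX, hXY, hYY]
  -- atom conversions
  have hyx : Matrix.trace (Vᵀ*V*(Uᵀ*U)) = Matrix.trace (Uᵀ*U*(Vᵀ*V)) :=
    Matrix.trace_mul_comm _ _
  have k1 : Matrix.trace (Uᵀ*A*(Aᵀ*U)) = Matrix.trace (Aᵀ*U*(Uᵀ*A)) :=
    Matrix.trace_mul_comm _ _
  have k2 : Matrix.trace (Uᵀ*A*(Bᵀ*V)) = Matrix.trace (Aᵀ*U*(Vᵀ*B)) := by
    rw [← Matrix.trace_transpose (Uᵀ*A*(Bᵀ*V))]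
    simp only [Matrix.transpose_mul, Matrix.transpose_transpose]
    rw [Matrix.trace_mul_comm]
  have k3 : Matrix.trace (Vᵀ*B*(Aᵀ*U)) = Matrix.trace (Aᵀ*U*(Vᵀ*B)) :=
    Matrix.trace_mul_comm _ _
  have k3' : Matrix.trace (Bᵀ*V*(Uᵀ*A)) = Matrix.trace (Aᵀ*U*(Vᵀ*B)) := by
    rw [← Matrix.trace_transpose (Bᵀ*V*(Uᵀ*A))]
    simp only [Matrix.transpose_mul, Matrix.transpose_transpose]
  have k4 : Matrix.trace (Vᵀ*B*(Bᵀ*V)) = Matrix.trace (Bᵀ*V*(Vᵀ*B)) :=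
    Matrix.trace_mul_comm _ _
  -- gram expansions
  have g1 : Matrix.trace ((Uᵀ*U + Vᵀ*V)*(Uᵀ*U + Vᵀ*V))
      = Matrix.trace (Uᵀ*U*(Uᵀ*U)) + 2*Matrix.trace (Uᵀ*U*(Vᵀ*V))
        + Matrix.trace (Vᵀ*V*(Vᵀ*V)) := by
    simp only [Matrix.add_mul, Matrix.mul_add, Matrix.trace_add]
    rw [hyx]; ring
  have g2 : Matrix.trace ((Uᵀ*A + Vᵀ*B)*(Uᵀ*A + Vᵀ*B)ᵀ)
      = Matrix.trace (Aᵀ*U*(Uᵀ*A)) + 2*Matrix.trace (Aᵀ*U*(Vᵀ*B))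
        + Matrix.trace (Bᵀ*V*(Vᵀ*B)) := by
    rw [Matrix.transpose_add]
    simp only [Matrix.transpose_mul, Matrix.transpose_transpose, Matrix.add_mul,
      Matrix.mul_add, Matrix.trace_add]
    rw [k1, k2, k3, k4]; ring
  have g3 : Matrix.trace ((Aᵀ*A + Aᵀ*A)*(Aᵀ*A + Aᵀ*A)) = 4*Matrix.trace (Aᵀ*A*(Aᵀ*A)) := by
    simp only [Matrix.add_mul, Matrix.mul_add, Matrix.trace_add]; ring
  -- fs expansions
  have fuv : fs (U*Vᵀ - A*Bᵀ)
      = Matrix.trace (Uᵀ*U*(Vᵀ*V)) - 2*Matrix.trace (Aᵀ*U*(Vᵀ*B))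
        + Matrix.trace (Aᵀ*A*(Aᵀ*A)) := by
    rw [fs_eq_trace, Matrix.transpose_sub]
    simp only [Matrix.sub_mul, Matrix.mul_sub, Matrix.trace_sub, Matrix.transpose_mul,
      Matrix.transpose_transpose]
    have u1 : Matrix.trace (V*Uᵀ*(U*Vᵀ)) = Matrix.trace (Uᵀ*U*(Vᵀ*V)) := by
      rw [Matrix.mul_assoc, Matrix.trace_mul_comm]; simp only [Matrix.mul_assoc]
    have u2 : Matrix.trace (V*Uᵀ*(A*Bᵀ)) = Matrix.trace (Aᵀ*U*(Vᵀ*B)) := by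
      rw [← Matrix.trace_transpose (V*Uᵀ*(A*Bᵀ))]
      simp only [Matrix.transpose_mul, Matrix.transpose_transpose]
      rw [Matrix.mul_assoc, Matrix.trace_mul_comm]
      simp only [Matrix.mul_assoc]
    have u3 : Matrix.trace (B*Aᵀ*(U*Vᵀ)) = Matrix.trace (Aᵀ*U*(Vᵀ*B)) := by
      rw [Matrix.mul_assoc, Matrix.trace_mul_comm]; simp only [Matrix.mul_assoc]
    have u4 : Matrix.trace (B*Aᵀ*(A*Bᵀ)) = Matrix.trace (Aᵀ*A*(Aᵀ*A)) := by
      have h1 : Matrix.trace (B*Aᵀ*(A*Bᵀ)) = Matrix.trace (Aᵀ*A*(Bᵀ*B)) := by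
        rw [Matrix.mul_assoc, Matrix.trace_mul_comm]; simp only [Matrix.mul_assoc]
      rw [h1, ← hAB]
    rw [u1, u2, u3, u4]; ring
  have fuu : fs (Uᵀ*U - Vᵀ*V)
      = Matrix.trace (Uᵀ*U*(Uᵀ*U)) - 2*Matrix.trace (Uᵀ*U*(Vᵀ*V))
        + Matrix.trace (Vᵀ*V*(Vᵀ*V)) := by
    rw [fs_eq_trace, Matrix.transpose_sub]
    simp only [Matrix.sub_mul, Matrix.mul_sub, Matrix.trace_sub, Matrix.transpose_mul,
      Matrix.transpose_transpose]
    rw [hyx]; ring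
  have fca : fs (Uᵀ*A - Vᵀ*B)
      = Matrix.trace (Aᵀ*U*(Uᵀ*A)) - 2*Matrix.trace (Aᵀ*U*(Vᵀ*B))
        + Matrix.trace (Bᵀ*V*(Vᵀ*B)) := by
    rw [fs_eq_trace, Matrix.transpose_sub]
    simp only [Matrix.sub_mul, Matrix.mul_sub, Matrix.trace_sub, Matrix.transpose_mul,
      Matrix.transpose_transpose]
    rw [k3']; ring
  rw [g1, g2, g3, fuv, fuu, fca]
  ring


end ProcrustesAux

open ProcrustesAux in
theorem procrustes_dist_sq_bound (n₁ n₂ r : ℕ) (hr : 0 < r)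
    (Xstar : Matrix (Fin n₁) (Fin n₂) ℝ)
    (Ubar : Matrix (Fin n₁) (Fin r) ℝ) (Vbar : Matrix (Fin n₂) (Fin r) ℝ)
    (σ : Fin r → ℝ) (hσpos : ∀ i, 0 < σ i)
    (hσmono : ∀ i j : Fin r, i ≤ j → σ j ≤ σ i)
    (hU : Ubarᵀ * Ubar = 1) (hV : Vbarᵀ * Vbar = 1)
    (hX : Xstar = Ubar * Matrix.diagonal σ * Vbarᵀ)
    (U : Matrix (Fin n₁) (Fin r) ℝ) (V : Matrix (Fin n₂) (Fin r) ℝ) :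
    dP (Matrix.fromRows U V)
        (Matrix.fromRows (Ubar * Matrix.diagonal (fun i => Real.sqrt (σ i)))
          (Vbar * Matrix.diagonal (fun i => Real.sqrt (σ i)))) ^ 2
      ≤ (1 / ((Real.sqrt 2 - 1) * σ ⟨r - 1, by omega⟩)) *
          (frob (U * Vᵀ - Xstar) ^ 2 + (1 / 4) * frob (Uᵀ * U - Vᵀ * V) ^ 2) := by
  set σr : ℝ := σ ⟨r - 1, by omega⟩ with hσr
  have hσr0 : 0 < σr := hσpos _
  have hσrmin : ∀ i, σr ≤ σ i := by
    intro i
    apply hσmono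
    exact Fin.mk_le_mk.mpr (by omega)
  set Sg : Matrix (Fin r) (Fin r) ℝ := Matrix.diagonal (fun i => Real.sqrt (σ i)) with hSg
  set A : Matrix (Fin n₁) (Fin r) ℝ := Ubar * Sg with hA
  set B : Matrix (Fin n₂) (Fin r) ℝ := Vbar * Sg with hB
  have hSgSg : Sg * Sg = Matrix.diagonal σ := by
    rw [hSg, Matrix.diagonal_mul_diagonal]
    exact congrArg Matrix.diagonal (funext fun i => Real.mul_self_sqrt (hσpos i).le)
  have hAA : Aᵀ * A = Matrix.diagonal σ := by
    rw [hA, Matrix.transpose_mul, Matrix.diagonal_transpose, ← hSg]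
    calc Sg * Ubarᵀ * (Ubar * Sg) = Sg * (Ubarᵀ * Ubar) * Sg := by
          simp only [Matrix.mul_assoc]
      _ = Sg * Sg := by rw [hU, Matrix.mul_one]
      _ = Matrix.diagonal σ := hSgSg
  have hBB : Bᵀ * B = Matrix.diagonal σ := by
    rw [hB, Matrix.transpose_mul, Matrix.diagonal_transpose, ← hSg]
    calc Sg * Vbarᵀ * (Vbar * Sg) = Sg * (Vbarᵀ * Vbar) * Sg := by
          simp only [Matrix.mul_assoc]
      _ = Sg * Sg := by rw [hV, Matrix.mul_one]
      _ = Matrix.diagonal σ := hSgSg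
  set Z : Matrix (Fin n₁ ⊕ Fin n₂) (Fin r) ℝ := Matrix.fromRows U V with hZ
  set Zs : Matrix (Fin n₁ ⊕ Fin n₂) (Fin r) ℝ := Matrix.fromRows A B with hZs
  have hZsZs : Zsᵀ * Zs = Matrix.diagonal σ + Matrix.diagonal σ := by
    rw [hZs, Matrix.transpose_fromRows, Matrix.fromCols_mul_fromRows, hAA, hBB]
  have hshift : (Zsᵀ * Zs - ((2*σr) • (1 : Matrix (Fin r) (Fin r) ℝ))).PosSemidef := by
    rw [hZsZs]
    have h2 : Matrix.diagonal σ + Matrix.diagonal σ - (2*σr) • (1 : Matrix (Fin r) (Fin r) ℝ)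
        = Matrix.diagonal (fun i => σ i + σ i - (2*σr)) := by
      rw [← Matrix.diagonal_one, ← Matrix.diagonal_smul, Matrix.diagonal_add,
        Matrix.diagonal_sub]
      exact congrArg Matrix.diagonal (funext fun i => by simp)
    rw [h2]
    refine Matrix.posSemidef_diagonal_iff.mpr ?_
    intro i
    have := hσrmin i
    simp only [sub_nonneg]
    linarith
  -- the key inequality
  have hkey := key Z Zs σr hσr0.le hshift
  -- block identity
  have hblock := fs_block U V A B (hAA.trans hBB.symm)
  have hABX : A * Bᵀ = Xstar := by
    rw [hX, hA, hB, Matrix.transpose_mul, Matrix.diagonal_transpose, ← hSg]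
    calc Ubar * Sg * (Sg * Vbarᵀ) = Ubar * (Sg * Sg) * Vbarᵀ := by
          simp only [Matrix.mul_assoc]
      _ = Ubar * Matrix.diagonal σ * Vbarᵀ := by rw [hSgSg]
  have hmid : fs (Z*Zᵀ - Zs*Zsᵀ) ≤ 4 * fs (U*Vᵀ - Xstar) + fs (Uᵀ*U - Vᵀ*V) := by
    rw [← hABX]
    have h0 := fs_nonneg (Uᵀ*A - Vᵀ*B)
    rw [hZ, hZs]
    linarith [hblock]
  -- assemble
  have hs2 : Real.sqrt 2 ^ 2 = 2 := Real.sq_sqrt (by norm_num)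
  have h1s : 1 < Real.sqrt 2 := by nlinarith [hs2, Real.sqrt_nonneg 2]
  have hpos : 0 < (Real.sqrt 2 - 1) * σr := mul_pos (by linarith) hσr0
  rw [frob_sq, frob_sq, one_div_mul_eq_div, le_div_iff₀ hpos]
  have hchain : 4*(Real.sqrt 2 - 1)*σr * dP Z Zs ^ 2
      ≤ 4 * fs (U*Vᵀ - Xstar) + fs (Uᵀ*U - Vᵀ*V) := le_trans hkey hmid
  rw [hZ, hZs] at hchain
  nlinarith [hchain]
end

section
/- Let Z = (U; V) and Z* = (U*; V*) be stacked factor matrices with U, U* ∈ ℝ^{n₁×r} and V, V* ∈ ℝ^{n₂×r}, where U* V*ᵀ = X* and U*ᵀU* = V*ᵀV* (balanced factorization of X*). Then ‖ZZᵀ − Z*Z*ᵀ‖_F² ≤ 4‖UVᵀ − X*‖_F² + ‖UᵀU − VᵀV‖_F². -/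
open Matrix

lemma frob_sq {m n : Type*} [Fintype m] [Fintype n] (A : Matrix m n ℝ) :
    frob A ^ 2 = Matrix.trace (Aᵀ * A) := by
  rw [frob, Real.sq_sqrt (by positivity), Matrix.trace]
  simp only [Matrix.diag, Matrix.mul_apply, Matrix.transpose_apply, sq]
  exact Finset.sum_comm

lemma trace_fromBlocks' {m n : Type*} [Fintype m] [Fintype n]
    (A : Matrix m m ℝ) (B : Matrix m n ℝ) (C : Matrix n m ℝ) (D : Matrix n n ℝ) :
    Matrix.trace (fromBlocks A B C D) = Matrix.trace A + Matrix.trace D := by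
  simp [Matrix.trace, Fintype.sum_sum_type, fromBlocks]

lemma fromBlocks_sub' {m n : Type*}
    (A A' : Matrix m m ℝ) (B B' : Matrix m n ℝ) (C C' : Matrix n m ℝ) (D D' : Matrix n n ℝ) :
    fromBlocks A B C D - fromBlocks A' B' C' D' = fromBlocks (A-A') (B-B') (C-C') (D-D') := by
  ext (i|i) (j|j) <;> simp [fromBlocks]

lemma tr_cross {m k r : Type*} [Fintype m] [Fintype k] [Fintype r]
    (A C : Matrix m r ℝ) (B D : Matrix k r ℝ) :
    Matrix.trace ((A*Bᵀ)ᵀ*(C*Dᵀ)) = Matrix.trace (Aᵀ*C*(Dᵀ*B)) := by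
  rw [transpose_mul, transpose_transpose, Matrix.mul_assoc, Matrix.trace_mul_comm]
  simp only [Matrix.mul_assoc]

lemma tr_inner_symm {m n : Type*} [Fintype m] [Fintype n] (A B : Matrix m n ℝ) :
    Matrix.trace (Aᵀ*B) = Matrix.trace (Bᵀ*A) := by
  rw [← Matrix.trace_transpose, transpose_mul, transpose_transpose]

theorem gram_diff_bound (n₁ n₂ r : ℕ)
    (Xstar : Matrix (Fin n₁) (Fin n₂) ℝ)
    (U Ustar : Matrix (Fin n₁) (Fin r) ℝ) (V Vstar : Matrix (Fin n₂) (Fin r) ℝ)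
    (hfac : Ustar * Vstarᵀ = Xstar)
    (hbal : Ustarᵀ * Ustar = Vstarᵀ * Vstar) :
    frob (Matrix.fromRows U V * (Matrix.fromRows U V)ᵀ -
          Matrix.fromRows Ustar Vstar * (Matrix.fromRows Ustar Vstar)ᵀ) ^ 2
      ≤ 4 * frob (U * Vᵀ - Xstar) ^ 2 + frob (Uᵀ * U - Vᵀ * V) ^ 2 := by
  subst hfac
  rw [transpose_fromRows, fromRows_mul_fromCols, transpose_fromRows,
    fromRows_mul_fromCols, fromBlocks_sub', frob_sq, frob_sq, frob_sq,
    fromBlocks_transpose, fromBlocks_multiply, trace_fromBlocks',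
    Matrix.trace_add, Matrix.trace_add]
  -- monomial equalities
  have hp' : Matrix.trace (Ustarᵀ*U*(Uᵀ*Ustar)) = Matrix.trace (Uᵀ*Ustar*(Ustarᵀ*U)) :=
    Matrix.trace_mul_comm _ _
  have hs' : Matrix.trace (Vstarᵀ*V*(Vᵀ*Vstar)) = Matrix.trace (Vᵀ*Vstar*(Vstarᵀ*V)) :=
    Matrix.trace_mul_comm _ _
  have hb' : Matrix.trace (Vᵀ*V*(Uᵀ*U)) = Matrix.trace (Uᵀ*U*(Vᵀ*V)) :=
    Matrix.trace_mul_comm _ _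
  have hw2 : Matrix.trace (Vstarᵀ*V*(Uᵀ*Ustar)) = Matrix.trace (Uᵀ*Ustar*(Vstarᵀ*V)) :=
    Matrix.trace_mul_comm _ _
  have hw3 : Matrix.trace (Ustarᵀ*U*(Vᵀ*Vstar)) = Matrix.trace (Uᵀ*Ustar*(Vstarᵀ*V)) := by
    have h := tr_inner_symm (Uᵀ*Ustar) (Vᵀ*Vstar)
    simp only [transpose_mul, transpose_transpose] at h
    rw [h, Matrix.trace_mul_comm]
  have hm2 : Matrix.trace (Vstarᵀ*Vstar*(Vstarᵀ*Vstar))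
      = Matrix.trace (Ustarᵀ*Ustar*(Ustarᵀ*Ustar)) := by rw [← hbal]
  have hm3 : Matrix.trace (Ustarᵀ*Ustar*(Vstarᵀ*Vstar))
      = Matrix.trace (Ustarᵀ*Ustar*(Ustarᵀ*Ustar)) := by rw [← hbal]
  -- expansions
  have e1 : Matrix.trace ((U*Uᵀ - Ustar*Ustarᵀ)ᵀ*(U*Uᵀ - Ustar*Ustarᵀ))
      = Matrix.trace (Uᵀ*U*(Uᵀ*U)) - 2*Matrix.trace (Uᵀ*Ustar*(Ustarᵀ*U))
        + Matrix.trace (Ustarᵀ*Ustar*(Ustarᵀ*Ustar)) := by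
    simp only [transpose_sub, Matrix.mul_sub, Matrix.sub_mul, Matrix.trace_sub, tr_cross]
    linarith [hp']
  have e4 : Matrix.trace ((V*Vᵀ - Vstar*Vstarᵀ)ᵀ*(V*Vᵀ - Vstar*Vstarᵀ))
      = Matrix.trace (Vᵀ*V*(Vᵀ*V)) - 2*Matrix.trace (Vᵀ*Vstar*(Vstarᵀ*V))
        + Matrix.trace (Ustarᵀ*Ustar*(Ustarᵀ*Ustar)) := by
    simp only [transpose_sub, Matrix.mul_sub, Matrix.sub_mul, Matrix.trace_sub, tr_cross]
    linarith [hs', hm2]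
  have e3 : Matrix.trace ((U*Vᵀ - Ustar*Vstarᵀ)ᵀ*(U*Vᵀ - Ustar*Vstarᵀ))
      = Matrix.trace (Uᵀ*U*(Vᵀ*V)) - 2*Matrix.trace (Uᵀ*Ustar*(Vstarᵀ*V))
        + Matrix.trace (Ustarᵀ*Ustar*(Ustarᵀ*Ustar)) := by
    simp only [transpose_sub, Matrix.mul_sub, Matrix.sub_mul, Matrix.trace_sub, tr_cross]
    linarith [hw3, hm3]
  have eC : Matrix.trace ((V*Uᵀ - Vstar*Ustarᵀ)ᵀ*(V*Uᵀ - Vstar*Ustarᵀ))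
      = Matrix.trace ((U*Vᵀ - Ustar*Vstarᵀ)ᵀ*(U*Vᵀ - Ustar*Vstarᵀ)) := by
    have hC : V*Uᵀ - Vstar*Ustarᵀ = (U*Vᵀ - Ustar*Vstarᵀ)ᵀ := by
      simp [transpose_sub]
    rw [hC, transpose_transpose, Matrix.trace_mul_comm]
  have e5 : Matrix.trace ((Uᵀ*U - Vᵀ*V)ᵀ*(Uᵀ*U - Vᵀ*V))
      = Matrix.trace (Uᵀ*U*(Uᵀ*U)) - 2*Matrix.trace (Uᵀ*U*(Vᵀ*V))
        + Matrix.trace (Vᵀ*V*(Vᵀ*V)) := by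
    simp only [transpose_sub, transpose_mul, transpose_transpose, Matrix.mul_sub,
      Matrix.sub_mul, Matrix.trace_sub]
    linarith [hb']
  have e6 : Matrix.trace ((Uᵀ*Ustar - Vᵀ*Vstar)ᵀ*(Uᵀ*Ustar - Vᵀ*Vstar))
      = Matrix.trace (Uᵀ*Ustar*(Ustarᵀ*U)) - 2*Matrix.trace (Uᵀ*Ustar*(Vstarᵀ*V))
        + Matrix.trace (Vᵀ*Vstar*(Vstarᵀ*V)) := by
    simp only [transpose_sub, transpose_mul, transpose_transpose, Matrix.mul_sub,
      Matrix.sub_mul, Matrix.trace_sub]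
    linarith [hp', hw3, hw2, hs']
  have h0 : 0 ≤ Matrix.trace ((Uᵀ*Ustar - Vᵀ*Vstar)ᵀ*(Uᵀ*Ustar - Vᵀ*Vstar)) := by
    rw [← frob_sq]; positivity
  linarith [e1, e3, e4, e5, e6, eC, h0]
end
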